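/- Let y ∈ ℝⁿ and let s be a split of a nonempty node t ⊆ {1,…,n} into disjoint nonempty children t_L and t_R, with local decision stump ψ_s ∈ ℝⁿ. Then the inner product satisfies ⟨ψ_s, y⟩ = √(N(t_L) N(t_R)) (ȳ_{t_L} − ȳ_{t_R}), and consequently N(t) · Δ̂(s, y) = ⟨ψ_s, y⟩² / ‖ψ_s‖², i.e., the node-size-weighted impurity decrease of s equals the squared norm of the orthogonal projection of y onto the line spanned by ψ_s. -/

import Mathlib

open Finset MeasureTheory RealInnerProductSpace

/-- A split of a node into two disjoint nonempty children. -/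
structure Split (n : ℕ) where
  left : Finset (Fin n)
  right : Finset (Fin n)
  left_nonempty : left.Nonempty
  right_nonempty : right.Nonempty
  disjoint : Disjoint left right

/-- The node being split is the union of the two children. -/
def Split.node {n : ℕ} (s : Split n) : Finset (Fin n) := s.left ∪ s.right

/-- Mean of the responses `y` over a subset `t` of samples. -/
noncomputable def meanOn {n : ℕ} (y : Fin n → ℝ) (t : Finset (Fin n)) : ℝ :=
  (∑ i ∈ t, y i) / t.card

/-- Impurity decrease of a split. -/
noncomputable def impurityDecrease {n : ℕ} (s : Split n) (y : Fin n → ℝ) : ℝ :=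
  (s.node.card : ℝ)⁻¹ *
    (∑ i ∈ s.node, (y i - meanOn y s.node) ^ 2
      - ∑ i ∈ s.left, (y i - meanOn y s.left) ^ 2
      - ∑ i ∈ s.right, (y i - meanOn y s.right) ^ 2)

/-- The local decision stump associated to a split. -/
noncomputable def stump {n : ℕ} (s : Split n) : EuclideanSpace ℝ (Fin n) := WithLp.toLp 2 fun i =>
  if i ∈ s.left then (s.right.card : ℝ) / Real.sqrt (s.left.card * s.right.card)
  else if i ∈ s.right then -(s.left.card : ℝ) / Real.sqrt (s.left.card * s.right.card)
  else 0

/-- The constant vector of all ones. -/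
noncomputable def ones (n : ℕ) : EuclideanSpace ℝ (Fin n) := WithLp.toLp 2 fun _ => (1 : ℝ)

/-- A tree structure: any two distinct splits have disjoint or suitably nested nodes. -/
def IsTreeStructure {n : ℕ} (S : Finset (Split n)) : Prop :=
  ∀ s ∈ S, ∀ s' ∈ S, s ≠ s' →
    s.node ∩ s'.node = ∅ ∨ s'.node ⊆ s.left ∨ s'.node ⊆ s.right ∨
      s.node ⊆ s'.left ∨ s.node ⊆ s'.right

/-- Mean decrease in impurity (MDI) of feature `k`, where `feat` assigns to each split the
feature it splits on. -/
noncomputable def MDI {n p : ℕ} (S : Finset (Split n)) (feat : Split n → Fin p)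
    (k : Fin p) (y : Fin n → ℝ) : ℝ :=
  (n : ℝ)⁻¹ * ∑ s ∈ S.filter (fun s => feat s = k), (s.node.card : ℝ) * impurityDecrease s y

/-- A rooted tree structure: a finite nonempty set of splits with pairwise distinct nodes,
exactly one of which is the full sample set, and every non-root node is a child of some split. -/
def IsRootedTree {n : ℕ} (S : Finset (Split n)) : Prop :=
  S.Nonempty ∧ Set.InjOn Split.node (↑S : Set (Split n)) ∧ (∃ s ∈ S, s.node = Finset.univ) ∧
    ∀ s ∈ S, s.node ≠ Finset.univ → ∃ s' ∈ S, s.node = s'.left ∨ s.node = s'.right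

/-- The leaves of a rooted tree structure: children of splits that are not themselves split. -/
def leafSet {n : ℕ} (S : Finset (Split n)) : Finset (Finset (Fin n)) :=
  (S.image Split.left ∪ S.image Split.right).filter fun t => ∀ s ∈ S, s.node ≠ t

lemma sum_sq_dev {n : ℕ} (y : Fin n → ℝ) (t : Finset (Fin n)) (ht : t.Nonempty) :
    ∑ i ∈ t, (y i - meanOn y t) ^ 2
      = ∑ i ∈ t, (y i) ^ 2 - (t.card : ℝ) * (meanOn y t) ^ 2 := by
  have hc : (t.card : ℝ) ≠ 0 := by
    exact_mod_cast Finset.card_ne_zero_of_mem ht.choose_spec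
  have hsum : ∑ i ∈ t, y i = (t.card : ℝ) * meanOn y t := by
    rw [meanOn]; field_simp
  have : ∀ i ∈ t, (y i - meanOn y t) ^ 2
      = (y i) ^ 2 - 2 * meanOn y t * y i + (meanOn y t) ^ 2 := by
    intro i _; ring
  rw [Finset.sum_congr rfl this]
  simp [Finset.sum_add_distrib, Finset.sum_sub_distrib, ← Finset.mul_sum, hsum]
  ring

set_option maxHeartbeats 1000000 in
/-- The inner product of a stump with the responses is `√(N(t_L) N(t_R))` times the difference
of child means; consequently the node-size-weighted impurity decrease equals the squared norm of
the orthogonal projection of `y` onto the line spanned by the stump. -/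
theorem stump_inner_and_weighted_impurity {n : ℕ} (y : Fin n → ℝ) (s : Split n) :
    (∑ i, stump s i * y i
      = Real.sqrt ((s.left.card : ℝ) * s.right.card) * (meanOn y s.left - meanOn y s.right)) ∧
    (s.node.card : ℝ) * impurityDecrease s y
      = (∑ i, stump s i * y i) ^ 2 / ∑ i, stump s i ^ 2 := by
  have haN : s.left.card ≠ 0 := Finset.card_ne_zero_of_mem s.left_nonempty.choose_spec
  have hbN : s.right.card ≠ 0 := Finset.card_ne_zero_of_mem s.right_nonempty.choose_spec
  have ha : (s.left.card : ℝ) ≠ 0 := by exact_mod_cast haN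
  have hb : (s.right.card : ℝ) ≠ 0 := by exact_mod_cast hbN
  have ha0 : (0:ℝ) < s.left.card := by positivity
  have hb0 : (0:ℝ) < s.right.card := by positivity
  set a : ℝ := (s.left.card : ℝ) with ha_def
  set b : ℝ := (s.right.card : ℝ) with hb_def
  have hab : (0:ℝ) < a * b := mul_pos ha0 hb0
  have hr : Real.sqrt (a * b) ≠ 0 := by positivity
  have hrsq : Real.sqrt (a * b) ^ 2 = a * b := Real.sq_sqrt hab.le
  have hnode : (s.node.card : ℝ) = a + b := by
    rw [Split.node, Finset.card_union_of_disjoint s.disjoint]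
    push_cast; ring
  have hab' : a + b ≠ 0 := by positivity
  -- sum over node splits
  have hsum_ext : ∀ f : Fin n → ℝ, (∀ i, i ∉ s.node → f i = 0) →
      ∑ i, f i = ∑ i ∈ s.left, f i + ∑ i ∈ s.right, f i := by
    intro f hf
    rw [← Finset.sum_union s.disjoint, ← Split.node]
    exact (Finset.sum_subset (Finset.subset_univ _) (fun i _ hi => hf i hi)).symm
  have hzero : ∀ i, i ∉ s.node → stump s i = 0 := by
    intro i hi
    simp only [Split.node, Finset.mem_union, not_or] at hi
    simp [stump, hi.1, hi.2]
  have h2 : Real.sqrt (a * b) * Real.sqrt (a * b) = a * b := Real.mul_self_sqrt hab.le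
  have hL : ∀ i ∈ s.left, stump s i = b / Real.sqrt (a * b) := by
    intro i hi; simp only [stump, PiLp.toLp_apply, if_pos hi]; rfl
  have hR : ∀ i ∈ s.right, stump s i = -a / Real.sqrt (a * b) := by
    intro i hi
    have h1 : i ∉ s.left := Finset.disjoint_right.mp s.disjoint hi
    simp only [stump, PiLp.toLp_apply, if_neg h1, if_pos hi]; rfl
  set SL : ℝ := ∑ i ∈ s.left, y i with hSL
  set SR : ℝ := ∑ i ∈ s.right, y i with hSR
  have eL : ∑ i ∈ s.left, stump s i * y i = b / Real.sqrt (a * b) * SL := by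
    rw [hSL, Finset.mul_sum]; exact Finset.sum_congr rfl fun i hi => by rw [hL i hi]
  have eR : ∑ i ∈ s.right, stump s i * y i = -a / Real.sqrt (a * b) * SR := by
    rw [hSR, Finset.mul_sum]; exact Finset.sum_congr rfl fun i hi => by rw [hR i hi]
  have hinner : ∑ i, stump s i * y i = (b * SL - a * SR) / Real.sqrt (a * b) := by
    rw [hsum_ext _ (fun i hi => by rw [hzero i hi, zero_mul]), eL, eR]
    field_simp
    ring
  have hmL : meanOn y s.left = SL / a := rfl
  have hmR : meanOn y s.right = SR / b := rfl
  have part1 : ∑ i, stump s i * y i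
      = Real.sqrt (a * b) * (meanOn y s.left - meanOn y s.right) := by
    rw [hinner, hmL, hmR, div_eq_iff hr]
    have h3 : Real.sqrt (a * b) * (SL / a - SR / b) * Real.sqrt (a * b)
        = a * b * (SL / a - SR / b) := by
      rw [mul_comm (Real.sqrt (a * b)) (SL / a - SR / b), mul_assoc, h2]; ring
    rw [h3]
    field_simp
  refine ⟨part1, ?_⟩
  have eL2 : ∑ i ∈ s.left, stump s i ^ 2 = a * (b / Real.sqrt (a * b)) ^ 2 := by
    rw [Finset.sum_congr rfl (fun i hi => by rw [hL i hi]), Finset.sum_const, nsmul_eq_mul,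
      ← ha_def]
  have eR2 : ∑ i ∈ s.right, stump s i ^ 2 = b * (-a / Real.sqrt (a * b)) ^ 2 := by
    rw [Finset.sum_congr rfl (fun i hi => by rw [hR i hi]), Finset.sum_const, nsmul_eq_mul,
      ← hb_def]
  have hnormsq : ∑ i, stump s i ^ 2 = a + b := by
    rw [hsum_ext _ (fun i hi => by rw [hzero i hi]; ring), eL2, eR2, div_pow, div_pow,
      sq (Real.sqrt (a * b)), h2]
    field_simp
    ring
  have hsq : (∑ i, stump s i * y i) ^ 2
      = a * b * (meanOn y s.left - meanOn y s.right) ^ 2 := by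
    rw [part1, mul_pow, hrsq]
  rw [hsq, hnormsq]
  -- now compute LHS
  have hnodesum : ∑ i ∈ s.node, y i = SL + SR := by
    rw [Split.node, Finset.sum_union s.disjoint]
  have hnodesum2 : ∑ i ∈ s.node, (y i) ^ 2 = ∑ i ∈ s.left, (y i) ^ 2 + ∑ i ∈ s.right, (y i) ^ 2 := by
    rw [Split.node, Finset.sum_union s.disjoint]
  have hnode_ne : s.node.Nonempty := s.left_nonempty.mono Finset.subset_union_left
  have hmT : meanOn y s.node = (SL + SR) / (a + b) := by
    rw [meanOn, hnodesum, hnode]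
  rw [impurityDecrease, sum_sq_dev y s.node hnode_ne, sum_sq_dev y s.left s.left_nonempty,
    sum_sq_dev y s.right s.right_nonempty, hnode, hnodesum2, hmT, hmL, hmR, ← ha_def, ← hb_def]
  field_simp
  ring
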